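/- A set T of real numbers is connected in Cantor's sense if and only if its closure is an interval (equivalently, T is dense in an interval), provided T is nonempty. In particular, every dense subset of ℝ is Cantor-connected. -/

import Mathlib

/-!
A chain with steps shorter than `ε` cannot jump across a gap of width `ε` in `T`, so a gap in
`closure T` between two of its points rules out Cantor-connectedness. Conversely, if
`closure T` is an interval, subdivide the segment from `t` to `t'` finely and replace each grid
point outside `T` by a nearby point of `T`; steps then stay below `ε`.
-/

def CantorConnected (T : Set ℝ) : Prop :=
  ∀ t ∈ T, ∀ t' ∈ T, ∀ ε : ℝ, 0 < ε →
    ∃ n : ℕ, ∃ f : Fin (n + 2) → ℝ, (∀ i, f i ∈ T) ∧ f 0 = t ∧ f (Fin.last (n + 1)) = t' ∧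
      ∀ i : Fin (n + 1), |f i.castSucc - f i.succ| < ε

lemma Fin.forall_le_of_step_lt_of_gap {n : ℕ} {f : Fin (n + 1) → ℝ} {a b ε : ℝ}
    (hε : ε ≤ b - a) (hgap : ∀ i, f i ≤ a ∨ b ≤ f i)
    (hstep : ∀ i : Fin n, |f i.castSucc - f i.succ| < ε) (h0 : f 0 ≤ a) :
    ∀ i, f i ≤ a := by
  intro i
  induction i using Fin.induction with
  | zero => exact h0
  | succ i ih =>
    have := (abs_lt.mp (hstep i)).1
    exact (hgap i.succ).resolve_right fun h => by linarith

lemma ordConnected_closure_of_cantorConnected {T : Set ℝ} (hT : CantorConnected T) :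
    (closure T).OrdConnected := by
  refine ⟨fun x hx y hy z ⟨hxz, hzy⟩ => ?_⟩
  by_contra hz
  obtain ⟨ε, hε, hball⟩ : ∃ ε > 0, ∀ u ∈ T, ε ≤ |u - z| := by
    simpa [Metric.mem_closure_iff, Real.dist_eq, abs_sub_comm] using hz
  have hgap : ∀ u ∈ T, u ≤ z - ε ∨ z + ε ≤ u := fun u hu => by
    rcases le_abs'.mp (hball u hu) with h | h
    · exact .inl (by linarith)
    · exact .inr (by linarith)
  obtain ⟨a, ha, hxa⟩ := Metric.mem_closure_iff.mp hx ε hε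
  obtain ⟨b, hb, hyb⟩ := Metric.mem_closure_iff.mp hy ε hε
  rw [Real.dist_eq, abs_lt] at hxa hyb
  have haz : a ≤ z - ε := (hgap a ha).resolve_right fun h => by linarith
  have hbz : z + ε ≤ b := (hgap b hb).resolve_left fun h => by linarith
  obtain ⟨n, f, hfT, hf0, hfl, hstep⟩ := hT a ha b hb ε hε
  have := Fin.forall_le_of_step_lt_of_gap (by linarith) (fun i => hgap _ (hfT i)) hstep
    (hf0 ▸ haz) (Fin.last (n + 1))
  linarith

lemma exists_approx_of_mem_closure {X ι : Type*} [PseudoMetricSpace X] {T : Set X}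
    {z : ι → X} (hz : ∀ i, z i ∈ closure T) {δ : ℝ} (hδ : 0 < δ) :
    ∃ g : ι → X, (∀ i, g i ∈ T) ∧ (∀ i, dist (g i) (z i) < δ) ∧
      ∀ i, z i ∈ T → g i = z i := by
  have (i : ι) : ∃ u ∈ T, dist u (z i) < δ ∧ (z i ∈ T → u = z i) := by
    by_cases hi : z i ∈ T
    · exact ⟨z i, hi, by simpa using hδ, fun _ => rfl⟩
    · obtain ⟨u, hu, hdu⟩ := Metric.mem_closure_iff.mp (hz i) δ hδ
      exact ⟨u, hu, by rwa [dist_comm], fun h => absurd h hi⟩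
  choose g hgT hgz hfix using this
  exact ⟨g, hgT, hgz, hfix⟩

lemma exists_uniform_subdivision (t t' : ℝ) (n : ℕ) :
    ∃ z : Fin (n + 2) → ℝ, z 0 = t ∧ z (Fin.last (n + 1)) = t' ∧
      (∀ i, z i ∈ Set.uIcc t t') ∧
      ∀ i : Fin (n + 1), |z i.castSucc - z i.succ| = |t' - t| / (n + 1) := by
  have hn : (0 : ℝ) < n + 1 := by positivity
  refine ⟨fun i => t + ((i : ℝ) / (n + 1)) • (t' - t), by simp, by simp [hn.ne'], fun i => ?_,
    fun i => ?_⟩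
  · exact Set.ordConnected_uIcc.convex.add_smul_sub_mem Set.left_mem_uIcc Set.right_mem_uIcc
      ⟨by positivity, (div_le_one hn).mpr (by exact_mod_cast i.is_le)⟩
  · simp only [smul_eq_mul, Fin.val_castSucc, Fin.val_succ, Nat.cast_add, Nat.cast_one]
    rw [show t + (i : ℝ) / (n + 1) * (t' - t) - (t + ((i : ℝ) + 1) / (n + 1) * (t' - t))
        = -((t' - t) / (n + 1)) by field_simp; ring, abs_neg, abs_div, abs_of_pos hn]

lemma cantorConnected_of_ordConnected_closure {T : Set ℝ} (hT : (closure T).OrdConnected) :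
    CantorConnected T := by
  intro t ht t' ht' ε hε
  obtain ⟨n, hn⟩ := exists_nat_gt (3 * |t' - t| / ε)
  obtain ⟨z, hz0, hzl, hzT, hzstep⟩ := exists_uniform_subdivision t t' n
  have hmesh : |t' - t| / (n + 1) < ε / 3 := by
    rw [div_lt_iff₀ (by positivity)]
    rw [div_lt_iff₀ hε] at hn
    linarith [abs_nonneg (t' - t)]
  obtain ⟨g, hgT, hgz, hfix⟩ := exists_approx_of_mem_closure
    (fun i => hT.uIcc_subset (subset_closure ht) (subset_closure ht') (hzT i))
    (by positivity : 0 < ε / 3)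
  refine ⟨n, g, hgT, by rw [hfix 0 (hz0 ▸ ht), hz0], by rw [hfix _ (hzl ▸ ht'), hzl],
    fun i => ?_⟩
  rw [← Real.dist_eq] at hzstep ⊢
  calc dist (g i.castSucc) (g i.succ)
      ≤ dist (g i.castSucc) (z i.castSucc) + dist (z i.castSucc) (z i.succ) +
          dist (z i.succ) (g i.succ) := dist_triangle4 _ _ _ _
    _ < ε / 3 + ε / 3 + ε / 3 := by
        gcongr
        · exact hgz _
        · exact (hzstep i).trans_lt hmesh
        · exact dist_comm (g _) _ ▸ hgz _
    _ = ε := by ring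

theorem stmt_3 :
    (∀ T : Set ℝ, T.Nonempty → (CantorConnected T ↔ (closure T).OrdConnected)) ∧
    (∀ T : Set ℝ, Dense T → CantorConnected T) :=
  ⟨fun _ _ =>
    ⟨ordConnected_closure_of_cantorConnected, cantorConnected_of_ordConnected_closure⟩,
    fun _ hT => cantorConnected_of_ordConnected_closure (hT.closure_eq ▸ Set.ordConnected_univ)⟩
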